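/- arXiv:2605.10219 — 3 statements merged into one kernel-verified Lean document; each statement's English description precedes it below -/
import Mathlib

section
/- Let f : ℝ^d → ℝ be continuous and piecewise-affine. For any point w, there exist r > 0 and a positively homogeneous continuous piecewise-affine function φ such that f(w+u) = f(w) + φ(u) for all u with ‖u‖ ≤ r. -/
/-!
Near `w` only the cells containing `w` matter, and on each of them `f` is affine, so
`ψ u = f (w + u) - f w` satisfies `ψ (t • u) = t * ψ u` for `t ∈ [0, 1]` on a small closed ball.
Extending `ψ` from that ball along rays gives a continuous positively homogeneous `φ`. It is
linear on the tangent cone at `w` of each cell containing `w`; these cones are polyhedral and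
cover the space, so `φ` is piecewise-affine.
-/

open scoped RealInnerProductSpace
open Filter

noncomputable section

abbrev E (d : ℕ) := EuclideanSpace ℝ (Fin d)

/-- A function is piecewise-affine if `ℝ^d` is covered by finitely many polyhedral
cells, with `f` affine on every cell. -/
def IsPiecewiseAffine {d : ℕ} (f : E d → ℝ) : Prop :=
  ∃ (n : ℕ) (C : Fin n → Set (E d)),
    (⋃ i, C i) = Set.univ ∧
    (∀ i, ∃ (m : ℕ) (a : Fin m → E d) (b : Fin m → ℝ),
      C i = {x | ∀ j, ⟪a j, x⟫ ≤ b j}) ∧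
    (∀ i, ∃ (g : E d) (c : ℝ), ∀ x ∈ C i, f x = ⟪g, x⟫ + c)

def PositivelyHomogeneous {d : ℕ} (φ : E d → ℝ) : Prop :=
  ∀ t : ℝ, 0 ≤ t → ∀ u : E d, φ (t • u) = t * φ u

open Topology Set

section Polyhedron

variable {V : Type*} [NormedAddCommGroup V] [InnerProductSpace ℝ V] {m : ℕ}

def polyhedron (a : Fin m → V) (b : Fin m → ℝ) : Set V := {x | ∀ j, ⟪a j, x⟫ ≤ b j}

def polyhedralTangentCone (a : Fin m → V) (b : Fin m → ℝ) (w : V) : Set V :=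
  {u | ∀ j, ⟪a j, w⟫ = b j → ⟪a j, u⟫ ≤ 0}

variable (a : Fin m → V) (b : Fin m → ℝ)

lemma polyhedron_eq_iInter : polyhedron a b = ⋂ j, {x | ⟪a j, x⟫ ≤ b j} := by
  ext x; simp [polyhedron]

lemma isClosed_polyhedron : IsClosed (polyhedron a b) := by
  rw [polyhedron_eq_iInter]
  exact isClosed_iInter fun j => isClosed_le (by fun_prop) continuous_const

lemma convex_polyhedron : Convex ℝ (polyhedron a b) := by
  rw [polyhedron_eq_iInter]
  exact convex_iInter fun j => convex_halfSpace_le (innerₛₗ ℝ (a j)).isLinear _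

lemma polyhedralTangentCone_eq_polyhedron (w : V) :
    polyhedralTangentCone a b w = polyhedron (fun j => if ⟪a j, w⟫ = b j then a j else 0) 0 := by
  ext u
  simp only [polyhedralTangentCone, polyhedron, mem_ofPred_eq, Pi.zero_apply]
  refine forall_congr' fun j => ?_
  split_ifs with h <;> simp [h]

lemma polyhedron_empty : polyhedron (fun _ : Fin 1 => (0 : V)) (fun _ => -1) = ∅ := by
  ext x; simp [polyhedron]

variable {a b} {w u : V}

lemma mem_polyhedralTangentCone_of_add_smul_mem {t : ℝ} (ht : 0 < t)
    (htu : w + t • u ∈ polyhedron a b) : u ∈ polyhedralTangentCone a b w := by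
  intro j hj
  have := htu j
  rw [inner_add_right, inner_smul_right, hj] at this
  nlinarith

lemma eventually_add_smul_mem_polyhedron (hw : w ∈ polyhedron a b)
    (hu : u ∈ polyhedralTangentCone a b w) : ∀ᶠ t in 𝓝[>] (0 : ℝ), w + t • u ∈ polyhedron a b := by
  refine eventually_all.2 fun j => ?_
  by_cases hj : ⟪a j, w⟫ = b j
  · filter_upwards [self_mem_nhdsWithin] with t (ht : 0 < t)
    rw [inner_add_right, inner_smul_right, hj]
    nlinarith [hu j hj]
  · have hcont : Tendsto (fun t : ℝ => ⟪a j, w + t • u⟫) (𝓝 0) (𝓝 ⟪a j, w⟫) :=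
      Continuous.tendsto' (by fun_prop) _ _ (by simp)
    exact (hcont.eventually_le_const (lt_of_le_of_ne (hw j) hj)).filter_mono nhdsWithin_le_nhds

end Polyhedron

lemma eventually_exists_mem_of_isClosed_cover {X ι : Type*} [TopologicalSpace X] [Finite ι]
    {C : ι → Set X} (hC : ∀ i, IsClosed (C i)) (hcov : ⋃ i, C i = univ) (w : X) :
    ∀ᶠ x in 𝓝 w, ∃ i, w ∈ C i ∧ x ∈ C i := by
  have hfar : ∀ᶠ x in 𝓝 w, ∀ i, w ∉ C i → x ∉ C i :=
    eventually_all.2 fun i => by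
      by_cases hw : w ∈ C i
      · exact .of_forall fun _ h => absurd hw h
      · filter_upwards [(hC i).isOpen_compl.mem_nhds hw] with x hx _ using hx
  filter_upwards [hfar] with x hx
  obtain ⟨i, hi⟩ := mem_iUnion.1 (hcov ▸ mem_univ x)
  exact ⟨i, by_contra fun hw => hx i hw hi, hi⟩

lemma exists_pos_forall_norm_le_exists_mem_of_isClosed_cover {V ι : Type*}
    [SeminormedAddCommGroup V] [Finite ι] {C : ι → Set V} (hC : ∀ i, IsClosed (C i))
    (hcov : ⋃ i, C i = univ) (w : V) :
    ∃ r > 0, ∀ u : V, ‖u‖ ≤ r → ∃ i, w ∈ C i ∧ w + u ∈ C i := by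
  obtain ⟨r, hr, hball⟩ := Metric.nhds_basis_closedBall.eventually_iff.1
    (eventually_exists_mem_of_isClosed_cover hC hcov w)
  exact ⟨r, hr, fun u hu => hball (by simpa [mem_closedBall_iff_norm] using hu)⟩

lemma sub_eq_mul_sub_of_eq_inner_add_const {V : Type*} [NormedAddCommGroup V]
    [InnerProductSpace ℝ V] {f : V → ℝ} {s : Set V} (hs : Convex ℝ s) {g : V} {c : ℝ}
    (hf : ∀ x ∈ s, f x = ⟪g, x⟫ + c) {w u : V} (hw : w ∈ s) (hwu : w + u ∈ s) {t : ℝ}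
    (ht : t ∈ Icc (0 : ℝ) 1) : f (w + t • u) - f w = t * (f (w + u) - f w) := by
  rw [hf _ (hs.add_smul_mem hw hwu ht), hf _ hwu, hf _ hw, inner_add_right, inner_add_right,
    inner_smul_right]
  ring

section HomogeneousExtension

variable {V : Type*} [SeminormedAddCommGroup V] {ψ : V → ℝ} {r : ℝ}

def HomogeneousOnClosedBall [SMul ℝ V] (ψ : V → ℝ) (r : ℝ) : Prop :=
  ∀ u : V, ‖u‖ ≤ r → ∀ t ∈ Icc (0 : ℝ) 1, ψ (t • u) = t * ψ u

/-- Equal to `1` on the closed ball of radius `r`, so that `homogeneousExtension ψ r` agrees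
with `ψ` there. -/
def radialScale (r : ℝ) (u : V) : ℝ := r / max r ‖u‖

def homogeneousExtension [SMul ℝ V] (ψ : V → ℝ) (r : ℝ) (u : V) : ℝ :=
  ψ (radialScale r u • u) / radialScale r u

lemma radialScale_pos (hr : 0 < r) (u : V) : 0 < radialScale r u :=
  div_pos hr (lt_max_of_lt_left hr)

lemma continuous_radialScale (hr : 0 < r) : Continuous (radialScale (V := V) r) :=
  continuous_const.div (by fun_prop) fun _ => (lt_max_of_lt_left hr).ne'

variable [NormedSpace ℝ V]

lemma continuous_homogeneousExtension (hr : 0 < r) (hcont : Continuous ψ) :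
    Continuous (homogeneousExtension ψ r) :=
  have hs := continuous_radialScale (V := V) hr
  (hcont.comp (hs.smul continuous_id)).div hs fun u => (radialScale_pos hr u).ne'

lemma norm_radialScale_smul_le (hr : 0 < r) (u : V) : ‖radialScale r u • u‖ ≤ r := by
  rw [norm_smul, Real.norm_of_nonneg (radialScale_pos hr u).le, radialScale, div_mul_eq_mul_div,
    div_le_iff₀ (lt_max_of_lt_left hr)]
  exact mul_le_mul_of_nonneg_left (le_max_right _ _) hr.le

lemma HomogeneousOnClosedBall.div_eq_div (hψ : HomogeneousOnClosedBall ψ r) {u : V} {α β : ℝ}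
    (hα : 0 < α) (hβ : 0 < β) (hαu : ‖α • u‖ ≤ r) (hβu : ‖β • u‖ ≤ r) :
    ψ (α • u) / α = ψ (β • u) / β := by
  wlog hαβ : α ≤ β generalizing α β
  · exact (this hβ hα hβu hαu (le_of_not_ge hαβ)).symm
  have h := hψ (β • u) hβu (α / β) ⟨by positivity, div_le_one_of_le₀ hαβ hβ.le⟩
  rw [smul_smul, div_mul_cancel₀ _ hβ.ne'] at h
  rw [h]
  field_simp

lemma homogeneousExtension_eq_div (hψ : HomogeneousOnClosedBall ψ r) (hr : 0 < r) {u : V} {c : ℝ}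
    (hc : 0 < c) (hcu : ‖c • u‖ ≤ r) : homogeneousExtension ψ r u = ψ (c • u) / c :=
  hψ.div_eq_div (radialScale_pos hr u) hc (norm_radialScale_smul_le hr u) hcu

lemma homogeneousExtension_of_norm_le (hψ : HomogeneousOnClosedBall ψ r) (hr : 0 < r) {u : V}
    (hu : ‖u‖ ≤ r) :
    homogeneousExtension ψ r u = ψ u := by
  simpa using homogeneousExtension_eq_div hψ hr one_pos (by simpa using hu)

lemma homogeneousExtension_smul (hψ : HomogeneousOnClosedBall ψ r) (hr : 0 < r) {t : ℝ}
    (ht : 0 ≤ t) (u : V) :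
    homogeneousExtension ψ r (t • u) = t * homogeneousExtension ψ r u := by
  rcases ht.eq_or_lt with rfl | ht
  · have hψ0 : ψ 0 = 0 := by simpa using hψ 0 (by simpa using hr.le) 0 ⟨le_rfl, zero_le_one⟩
    rw [zero_smul, zero_mul, homogeneousExtension_of_norm_le hψ hr (by simpa using hr.le), hψ0]
  have hs := radialScale_pos hr (t • u)
  have hsu : ‖(radialScale r (t • u) * t) • u‖ ≤ r := by
    rw [mul_smul]; exact norm_radialScale_smul_le hr _
  rw [homogeneousExtension_eq_div hψ hr (mul_pos hs ht) hsu, homogeneousExtension, smul_smul]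
  field_simp

end HomogeneousExtension

lemma homogeneousExtension_eq_inner_of_mem_polyhedralTangentCone {V : Type*}
    [NormedAddCommGroup V] [InnerProductSpace ℝ V] {f : V → ℝ} {r : ℝ} (hr : 0 < r) {w : V}
    (hψ : HomogeneousOnClosedBall (fun v => f (w + v) - f w) r)
    {m : ℕ} {a : Fin m → V} {b : Fin m → ℝ} {g : V} {c : ℝ}
    (hf : ∀ x ∈ polyhedron a b, f x = ⟪g, x⟫ + c) (hw : w ∈ polyhedron a b) {u : V}
    (hu : u ∈ polyhedralTangentCone a b w) :
    homogeneousExtension (fun v => f (w + v) - f w) r u = ⟪g, u⟫ := by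
  have hsmall : ∀ᶠ t in 𝓝[>] (0 : ℝ), ‖t • u‖ ≤ r :=
    (Continuous.tendsto' (by fun_prop) _ _ (by simp) |>.eventually_le_const hr).filter_mono
      nhdsWithin_le_nhds
  obtain ⟨t, ht : 0 < t, htu, htP⟩ :=
    (eventually_mem_nhdsWithin.and (hsmall.and (eventually_add_smul_mem_polyhedron hw hu))).exists
  rw [homogeneousExtension_eq_div hψ hr ht htu, hf _ htP, hf _ hw, inner_add_right,
    inner_smul_right]
  field_simp
  ring

lemma IsPiecewiseAffine.of_cover {d n : ℕ} {φ : E d → ℝ} (p : Fin n → Prop)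
    (P : Fin n → Set (E d))
    (hP : ∀ i, p i → ∃ (m : ℕ) (a : Fin m → E d) (b : Fin m → ℝ), P i = polyhedron a b)
    (hcov : ∀ x, ∃ i, p i ∧ x ∈ P i)
    (haff : ∀ i, p i → ∃ (g : E d) (c : ℝ), ∀ x ∈ P i, φ x = ⟪g, x⟫ + c) :
    IsPiecewiseAffine φ := by
  classical
  refine ⟨n, fun i => if p i then P i else ∅, ?_, fun i => ?_, fun i => ?_⟩
  · refine eq_univ_of_forall fun x => ?_
    obtain ⟨i, hi, hx⟩ := hcov x
    exact mem_iUnion.2 ⟨i, by simpa [hi] using hx⟩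
  · by_cases hi : p i
    · simp only [if_pos hi]; exact hP i hi
    · simp only [if_neg hi]; exact ⟨1, _, _, polyhedron_empty.symm⟩
  · by_cases hi : p i
    · simp only [if_pos hi]; exact haff i hi
    · simp only [if_neg hi]; exact ⟨0, 0, fun _ => False.elim⟩

theorem exact_local_model {d : ℕ} (f : E d → ℝ)
    (hf : Continuous f) (hPA : IsPiecewiseAffine f) (w : E d) :
    ∃ (r : ℝ), 0 < r ∧ ∃ (φ : E d → ℝ),
      Continuous φ ∧ IsPiecewiseAffine φ ∧ PositivelyHomogeneous φ ∧
      ∀ u : E d, ‖u‖ ≤ r → f (w + u) = f w + φ u := by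
  obtain ⟨n, C, hcov, hpoly, haff⟩ := hPA
  choose m a b hC using hpoly
  choose g c hg using haff
  obtain rfl : C = fun i => polyhedron (a i) (b i) := funext hC
  obtain ⟨r, hr, hloc⟩ := exists_pos_forall_norm_le_exists_mem_of_isClosed_cover
    (fun i => isClosed_polyhedron (a i) (b i)) hcov w
  have hψ : HomogeneousOnClosedBall (fun u => f (w + u) - f w) r := fun u hu t ht => by
    obtain ⟨i, hwi, hui⟩ := hloc u hu
    exact sub_eq_mul_sub_of_eq_inner_add_const (convex_polyhedron _ _) (hg i) hwi hui ht
  refine ⟨r, hr, homogeneousExtension (fun u => f (w + u) - f w) r,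
    continuous_homogeneousExtension hr (by fun_prop), ?_,
    fun t ht u => homogeneousExtension_smul hψ hr ht u,
    fun u hu => by rw [homogeneousExtension_of_norm_le hψ hr hu]; ring⟩
  refine .of_cover (fun i => w ∈ polyhedron (a i) (b i))
    (fun i => polyhedralTangentCone (a i) (b i) w)
    (fun i _ => ⟨_, _, _, polyhedralTangentCone_eq_polyhedron _ _ w⟩) (fun u => ?_)
    fun i hwi => ⟨g i, 0, fun u hu => by
      rw [homogeneousExtension_eq_inner_of_mem_polyhedralTangentCone hr hψ (hg i) hwi hu, add_zero]⟩
  obtain ⟨i, hwi, hi⟩ := hloc _ (norm_radialScale_smul_le hr u)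
  exact ⟨i, hwi, mem_polyhedralTangentCone_of_add_smul_mem (radialScale_pos hr u) hi⟩
end
end

section
/- Let f : ℝ^d → ℝ be continuous and piecewise-affine. Then 0 belongs to the Fréchet subdifferential of f at w if and only if w is a local minimizer of f. -/
open scoped RealInnerProductSpace
open Filter

noncomputable section

/-- The Fréchet subdifferential: `g` is a Fréchet subgradient of `f` at `x` iff
`liminf_{y→x, y≠x} (f y − f x − ⟪g, y−x⟫)/‖y−x‖ ≥ 0`, expressed in the equivalent
`ε`-form. -/
def frechetSubdiff {d : ℕ} (f : E d → ℝ) (x : E d) : Set (E d) :=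
  {g | ∀ ε : ℝ, 0 < ε →
    ∀ᶠ y in nhdsWithin x {x}ᶜ, -ε * ‖y - x‖ ≤ f y - f x - ⟪g, y - x⟫}

/-!
Near `w` only the finitely many closed cells containing `w` matter, so every `x` close to `w`
shares a convex cell with `w`, on which `f` is affine. Along the segment from `w` to `x` the
function then changes linearly, `f (w + t • (x - w)) = f w + t * (f x - f w)`, so `f x < f w`
would be a descent of slope proportional to `‖x - w‖` at `w`, which a zero Fréchet subgradient
forbids.
-/

open scoped Topology

section InnerProductSpace

variable {F : Type*} [NormedAddCommGroup F] [InnerProductSpace ℝ F] {ι : Type*}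

theorem isClosed_setOf_forall_inner_le (a : ι → F) (b : ι → ℝ) :
    IsClosed {x : F | ∀ j, ⟪a j, x⟫ ≤ b j} := by
  simp only [Set.ofPred_forall]
  exact isClosed_iInter fun j => isClosed_le (continuous_const.inner continuous_id) continuous_const

theorem convex_setOf_forall_inner_le (a : ι → F) (b : ι → ℝ) :
    Convex ℝ {x : F | ∀ j, ⟪a j, x⟫ ≤ b j} := by
  simp only [Set.ofPred_forall]
  exact convex_iInter fun j => convex_halfSpace_le (innerₛₗ ℝ (a j)).isLinear (b j)

theorem Convex.apply_add_smul_sub_of_eq_inner_add {C : Set F} (hC : Convex ℝ C) {f : F → ℝ}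
    {g : F} {c : ℝ} (hf : ∀ y ∈ C, f y = ⟪g, y⟫ + c) {w x : F} (hw : w ∈ C) (hx : x ∈ C) :
    ∀ t ∈ Set.Icc (0 : ℝ) 1, f (w + t • (x - w)) = f w + t * (f x - f w) := by
  intro t ht
  rw [hf _ (hC.add_smul_sub_mem hw hx ht), hf w hw, hf x hx, inner_add_right, inner_smul_right,
    inner_sub_right]
  ring

end InnerProductSpace

theorem tendsto_add_smul_nhdsNE {F : Type*} [NormedAddCommGroup F] [NormedSpace ℝ F]
    (w : F) {v : F} (hv : v ≠ 0) :
    Tendsto (fun t : ℝ => w + t • v) (𝓝[≠] 0) (𝓝[≠] w) := by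
  have hmaps : Set.MapsTo (fun t : ℝ => w + t • v) {0}ᶜ {w}ᶜ := fun t ht => by
    simpa [hv] using ht
  have hcont : Continuous fun t : ℝ => w + t • v := by fun_prop
  simpa using hcont.continuousWithinAt.tendsto_nhdsWithin (x := 0) hmaps

theorem eventually_exists_mem_of_iUnion_eq_univ {X ι : Type*} [TopologicalSpace X] [Finite ι]
    {C : ι → Set X} (hC : ∀ i, IsClosed (C i)) (hcov : ⋃ i, C i = Set.univ) (w : X) :
    ∀ᶠ x in 𝓝 w, ∃ i, w ∈ C i ∧ x ∈ C i := by
  have hfar : ∀ᶠ x in 𝓝 w, ∀ i, w ∉ C i → x ∉ C i :=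
    eventually_all.2 fun i => by
      by_cases hw : w ∈ C i
      · exact .of_forall fun _ h => absurd hw h
      · filter_upwards [(hC i).isOpen_compl.mem_nhds hw] with x hx _ using hx
  filter_upwards [hfar] with x hx
  obtain ⟨i, hxi⟩ := Set.mem_iUnion.1 (hcov ▸ Set.mem_univ x)
  exact ⟨i, by_contra fun hwi => hx i hwi hxi, hxi⟩

section FrechetSubdiff

variable {d : ℕ} {f : E d → ℝ} {w : E d}

theorem zero_mem_frechetSubdiff_iff :
    0 ∈ frechetSubdiff f w ↔ ∀ ε > 0, ∀ᶠ y in 𝓝[≠] w, f w - ε * ‖y - w‖ ≤ f y := by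
  simp only [frechetSubdiff, Set.mem_ofPred_eq, inner_zero_left, sub_zero]
  refine forall₂_congr fun ε _ => eventually_congr (.of_forall fun y => ?_)
  constructor <;> intro h <;> linarith

theorem zero_mem_frechetSubdiff_of_isLocalMin (h : IsLocalMin f w) : 0 ∈ frechetSubdiff f w :=
  zero_mem_frechetSubdiff_iff.2 fun ε hε =>
    (h.filter_mono nhdsWithin_le_nhds).mono fun y hy => by
      have := mul_nonneg hε.le (norm_nonneg (y - w))
      linarith

theorem le_of_zero_mem_frechetSubdiff_of_segment {x : E d} (h : 0 ∈ frechetSubdiff f w)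
    (hseg : ∀ t ∈ Set.Icc (0 : ℝ) 1, f (w + t • (x - w)) = f w + t * (f x - f w)) :
    f w ≤ f x := by
  by_contra! hlt
  have hxw : x - w ≠ 0 := sub_ne_zero.2 fun hxw => by simp [hxw] at hlt
  have hnorm : 0 < ‖x - w‖ := norm_pos_iff.2 hxw
  set ε := (f w - f x) / (2 * ‖x - w‖) with hεdef
  have hε : 0 < ε := div_pos (by linarith) (by positivity)
  have hεnorm : ε * ‖x - w‖ = (f w - f x) / 2 := by rw [hεdef]; field_simp
  have hnear : ∀ᶠ t in 𝓝[>] (0 : ℝ), f w - ε * ‖t • (x - w)‖ ≤ f (w + t • (x - w)) := by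
    have := (tendsto_add_smul_nhdsNE w hxw).eventually (zero_mem_frechetSubdiff_iff.1 h ε hε)
    simpa using this.filter_mono (nhdsGT_le_nhdsNE 0)
  obtain ⟨t, hdesc, ht0, ht1⟩ := (hnear.and (Ioo_mem_nhdsGT one_pos)).exists
  rw [hseg t ⟨ht0.le, ht1.le⟩, norm_smul, Real.norm_of_nonneg ht0.le, mul_left_comm,
    hεnorm] at hdesc
  have hdrop : 0 < t * (f w - f x) := mul_pos ht0 (sub_pos.2 hlt)
  linarith

end FrechetSubdiff

theorem frechet_stationary_iff_localMin_general {d : ℕ} (f : E d → ℝ)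
    (hPA : IsPiecewiseAffine f) (w : E d) :
    (0 : E d) ∈ frechetSubdiff f w ↔ IsLocalMin f w := by
  refine ⟨fun h => ?_, zero_mem_frechetSubdiff_of_isLocalMin⟩
  obtain ⟨n, C, hcov, hpoly, haff⟩ := hPA
  choose m a b hC using hpoly
  have hclosed i : IsClosed (C i) := hC i ▸ isClosed_setOf_forall_inner_le (a i) (b i)
  filter_upwards [eventually_exists_mem_of_iUnion_eq_univ hclosed hcov w] with x ⟨i, hwi, hxi⟩
  obtain ⟨g, c, hg⟩ := haff i
  have hconvex : Convex ℝ (C i) := hC i ▸ convex_setOf_forall_inner_le (a i) (b i)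
  exact le_of_zero_mem_frechetSubdiff_of_segment h
    (hconvex.apply_add_smul_sub_of_eq_inner_add hg hwi hxi)

theorem frechet_stationary_iff_localMin {d : ℕ} (f : E d → ℝ)
    (hf : Continuous f) (hPA : IsPiecewiseAffine f) (w : E d) :
    (0 : E d) ∈ frechetSubdiff f w ↔ IsLocalMin f w :=
  frechet_stationary_iff_localMin_general f hPA w
end
end

section
/- Let h, g : ℝ^d → ℝ be convex piecewise-affine functions with X = ∂h(w) and Y = ∂g(w). Then 0 ∈ ∂_F(h−g)(w) if and only if Y ⊆ X. -/
/-!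
If `s ∈ ∂g(w)` then `g y - g w ≥ ⟪s, y - w⟫`, so `0 ∈ ∂_F(h - g)(w)` makes `s` a Fréchet
subgradient of `h`, and for convex `h` a Fréchet subgradient is a convex one: the difference
quotients of `h` along a segment from `w` decrease as the segment shrinks.

Conversely, a convex piecewise affine `g` is the maximum of finitely many affine minorants
(its pieces with nonempty interior, whose union is dense by Baire). Near `w` only pieces active
at `w` can attain this maximum, so `g y - g w = ⟪v, y - w⟫` for some `v ∈ ∂g(w) ⊆ ∂h(w)`, and
hence `h - g` has a local minimum at `w`.
-/

open scoped RealInnerProductSpace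
open Filter

noncomputable section

/-- The convex subdifferential of a function at a point. -/
def convexSubdiff {d : ℕ} (f : E d → ℝ) (x : E d) : Set (E d) :=
  {s | ∀ y : E d, f x + ⟪s, y - x⟫ ≤ f y}

open Topology

section

variable {d : ℕ}

theorem convexSubdiff_subset_frechetSubdiff (f : E d → ℝ) (x : E d) :
    convexSubdiff f x ⊆ frechetSubdiff f x := by
  intro s hs ε hε
  filter_upwards with y
  have hsy := hs y
  have hεy : 0 ≤ ε * ‖y - x‖ := by positivity
  linarith

theorem add_mem_frechetSubdiff {f g : E d → ℝ} {x s t : E d}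
    (hs : s ∈ frechetSubdiff f x) (ht : t ∈ frechetSubdiff g x) :
    s + t ∈ frechetSubdiff (fun y => f y + g y) x := by
  intro ε hε
  filter_upwards [hs (ε / 2) (by positivity), ht (ε / 2) (by positivity)] with y hfy hgy
  rw [inner_add_left]
  linarith

theorem IsLocalMin.zero_mem_frechetSubdiff {f : E d → ℝ} {x : E d} (hf : IsLocalMin f x) :
    (0 : E d) ∈ frechetSubdiff f x := by
  intro ε hε
  filter_upwards [hf.filter_mono nhdsWithin_le_nhds] with y hy
  rw [inner_zero_left]
  nlinarith [norm_nonneg (y - x)]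

theorem ConvexOn.frechetSubdiff_subset {f : E d → ℝ} (hf : ConvexOn ℝ Set.univ f) (x : E d) :
    frechetSubdiff f x ⊆ convexSubdiff f x := by
  intro s hs y
  rcases eq_or_ne y x with rfl | hyx
  · simp
  have hn : 0 < ‖y - x‖ := norm_pos_iff.2 (sub_ne_zero.2 hyx)
  have hseg : Tendsto (fun t : ℝ => x + t • (y - x)) (𝓝[>] 0) (𝓝[≠] x) := by
    refine tendsto_nhdsWithin_of_tendsto_nhds_of_eventually_within _ ?_ ?_
    · have : Continuous (fun t : ℝ => x + t • (y - x)) := by fun_prop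
      simpa using this.continuousAt.tendsto.mono_left (nhdsWithin_le_nhds (a := (0 : ℝ)))
    · filter_upwards [self_mem_nhdsWithin] with t (ht : 0 < t)
      simp [ht.ne', sub_ne_zero.2 hyx]
  refine le_of_forall_pos_le_add fun ε hε => ?_
  obtain ⟨t, hfr, ht0 : 0 < t, ht1 : t < 1⟩ :=
    ((hseg.eventually (hs (ε / ‖y - x‖) (by positivity))).and
      (Ioo_mem_nhdsGT one_pos)).exists
  rw [add_sub_cancel_left, norm_smul, Real.norm_of_nonneg ht0.le, real_inner_smul_right] at hfr
  have hsec : f (x + t • (y - x)) ≤ f x + t * (f y - f x) := by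
    have := hf.2 (Set.mem_univ x) (Set.mem_univ y) (sub_nonneg.2 ht1.le) ht0.le (by ring)
    rw [show x + t • (y - x) = (1 - t) • x + t • y by module]
    simp only [smul_eq_mul] at this
    linarith
  have hε' : ε / ‖y - x‖ * (t * ‖y - x‖) = t * ε := by field_simp
  have hmul : t * (f x + ⟪s, y - x⟫) ≤ t * (f y + ε) := by nlinarith
  exact le_of_mul_le_mul_left hmul ht0

theorem ConvexOn.affine_le_of_eventuallyEq {f : E d → ℝ} (hf : ConvexOn ℝ Set.univ f)
    {a x₀ : E d} {c : ℝ} (hfa : f =ᶠ[𝓝 x₀] fun x => ⟪a, x⟫ + c) (x : E d) :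
    ⟪a, x⟫ + c ≤ f x := by
  have hconv : ConvexOn ℝ Set.univ (fun x => f x - (⟪a, x⟫ + c)) :=
    hf.sub (((innerSL ℝ a).toLinearMap.concaveOn convex_univ).add_const c)
  have hmin : IsLocalMin (fun x => f x - (⟪a, x⟫ + c)) x₀ := by
    filter_upwards [hfa] with y hy
    simp [hy, hfa.eq_of_nhds]
  have hx := IsMinOn.of_isLocalMin_of_convex_univ hmin hconv x
  simp only [hfa.eq_of_nhds, sub_self] at hx
  linarith

def IsMaxOfAffine (f : E d → ℝ) (S : Finset (E d × ℝ)) : Prop :=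
  (∀ p ∈ S, ∀ x, ⟪p.1, x⟫ + p.2 ≤ f x) ∧ ∀ x, ∃ p ∈ S, f x = ⟪p.1, x⟫ + p.2

theorem IsPiecewiseAffine.exists_isMaxOfAffine {f : E d → ℝ} (hPA : IsPiecewiseAffine f)
    (hconv : ConvexOn ℝ Set.univ f) : ∃ S, IsMaxOfAffine f S := by
  classical
  obtain ⟨n, C, hcover, hpoly, haff⟩ := hPA
  choose G c hGc using haff
  have hclosed : ∀ i, IsClosed (C i) := fun i => by
    obtain ⟨m, a, b, hC⟩ := hpoly i
    rw [hC, Set.ofPred_forall]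
    exact isClosed_iInter fun j => isClosed_le (by fun_prop) continuous_const
  set S := (Finset.univ.filter fun i => (interior (C i)).Nonempty).image fun i => (G i, c i)
  have hpiece : ∀ i, ∀ x ∈ interior (C i), (G i, c i) ∈ S ∧ f x = ⟪G i, x⟫ + c i :=
    fun i x hx => ⟨Finset.mem_image_of_mem _ (by simpa using ⟨x, hx⟩),
      hGc i x (interior_subset hx)⟩
  have hminor : ∀ p ∈ S, ∀ x, ⟪p.1, x⟫ + p.2 ≤ f x := by
    simp only [S, Finset.mem_image, Finset.mem_filter, Finset.mem_univ, true_and]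
    rintro _ ⟨i, ⟨x₀, hx₀⟩, rfl⟩
    exact hconv.affine_le_of_eventuallyEq <|
      eventually_of_mem (isOpen_interior.mem_nhds hx₀) fun y hy => hGc i y (interior_subset hy)
  have hfc : Continuous f := continuousOn_univ.1 (hconv.continuousOn isOpen_univ)
  have hattained : IsClosed {x | ∃ p ∈ S, f x = ⟪p.1, x⟫ + p.2} := by
    have : {x | ∃ p ∈ S, f x = ⟪p.1, x⟫ + p.2} = ⋃ p ∈ S, {x | f x = ⟪p.1, x⟫ + p.2} := by
      ext; simp
    rw [this]
    exact isClosed_biUnion_finset fun p _ => isClosed_eq hfc (by fun_prop)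
  refine ⟨S, hminor, fun x => ?_⟩
  have hdense := dense_iUnion_interior_of_closed hclosed hcover
  refine hattained.closure_subset_iff.2 ?_ (hdense.closure_eq ▸ Set.mem_univ x)
  rintro y ⟨_, ⟨i, rfl⟩, hy⟩
  exact ⟨_, hpiece i y hy⟩

theorem IsMaxOfAffine.eventually_exists_mem_convexSubdiff {f : E d → ℝ} {S : Finset (E d × ℝ)}
    (hS : IsMaxOfAffine f S) (w : E d) :
    ∀ᶠ y in 𝓝 w, ∃ v ∈ convexSubdiff f w, f y - f w = ⟪v, y - w⟫ := by
  obtain ⟨q, hqS, hq⟩ := hS.2 w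
  have hinactive : ∀ᶠ y in 𝓝 w, ∀ p ∈ S,
      ⟪p.1, w⟫ + p.2 < f w → ⟪p.1, y⟫ + p.2 < ⟪q.1, y⟫ + q.2 := by
    simp only [eventually_all_finset, eventually_imp_distrib_left]
    intro p _ hp
    exact ContinuousAt.eventually_lt (by fun_prop) (by fun_prop) (hq ▸ hp)
  filter_upwards [hinactive] with y hy
  obtain ⟨p, hpS, hp⟩ := hS.2 y
  have hactive : ⟪p.1, w⟫ + p.2 = f w := (hS.1 p hpS w).eq_or_lt.resolve_right
    fun hlt => (hy p hpS hlt).not_ge (hp ▸ hS.1 q hqS y)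
  refine ⟨p.1, fun x => ?_, ?_⟩
  · have hpx := hS.1 p hpS x
    rw [inner_sub_right]
    linarith
  · rw [hp, ← hactive, inner_sub_right]
    ring

end

theorem frechet_zero_iff_subdiff_subset_general {d : ℕ} (h g : E d → ℝ)
    (hconv : ConvexOn ℝ Set.univ h) (gconv : ConvexOn ℝ Set.univ g)
    (gPA : IsPiecewiseAffine g) (w : E d) :
    (0 : E d) ∈ frechetSubdiff (fun x => h x - g x) w ↔
      convexSubdiff g w ⊆ convexSubdiff h w := by
  constructor
  · intro hF s hs
    have hsF := add_mem_frechetSubdiff hF (convexSubdiff_subset_frechetSubdiff g w hs)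
    simp only [zero_add, sub_add_cancel] at hsF
    exact hconv.frechetSubdiff_subset w hsF
  · intro hYX
    obtain ⟨S, hS⟩ := gPA.exists_isMaxOfAffine gconv
    refine IsLocalMin.zero_mem_frechetSubdiff ?_
    filter_upwards [hS.eventually_exists_mem_convexSubdiff w] with y ⟨v, hv, hgy⟩
    have hhy := hYX hv y
    linarith

theorem frechet_zero_iff_subdiff_subset {d : ℕ} (h g : E d → ℝ)
    (hconv : ConvexOn ℝ Set.univ h) (gconv : ConvexOn ℝ Set.univ g)
    (hPA : IsPiecewiseAffine h) (gPA : IsPiecewiseAffine g) (w : E d) :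
    (0 : E d) ∈ frechetSubdiff (fun x => h x - g x) w ↔
      convexSubdiff g w ⊆ convexSubdiff h w :=
  frechet_zero_iff_subdiff_subset_general h g hconv gconv gPA w
end
end
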